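/- (Law of iterated lower expectations.) Consider an imprecise probability tree, an extended real variable f : Ω → ℝ ∪ {−∞,+∞}, and n, m ∈ ℕ ∪ {0} with n ≥ m. Define the n-measurable extended real variable g by g(ω) := E(f | ω^n) for all ω ∈ Ω. Then for every situation x_{1:m} of length m: E(f | x_{1:m}) = E(g | x_{1:m}). -/
import Mathlib


open Filter Topology

namespace IP

/-- A situation of length `n`: a tuple of the first `n` states. -/
abbrev Sit (𝒳 : ℕ → Type) (n : ℕ) := (i : Fin n) → 𝒳 i

/-- A path: an infinite sequence of states. -/
abbrev Path (𝒳 : ℕ → Type) := (i : ℕ) → 𝒳 i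

/-- The initial segment `ω^n` of a path. -/
def res {𝒳 : ℕ → Type} (ω : Path 𝒳) (n : ℕ) : Sit 𝒳 n := fun i => ω i

/-- The initial (empty) situation `□`. -/
def emptySit {𝒳 : ℕ → Type} : Sit 𝒳 0 := fun i => i.elim0

/-- Append a next state to a situation. -/
def snoc {𝒳 : ℕ → Type} {n : ℕ} (s : Sit 𝒳 n) (x : 𝒳 n) : Sit 𝒳 (n + 1) := fun i =>
  if h : (i : ℕ) < n then s ⟨i, h⟩
  else cast (congrArg 𝒳 (Nat.le_antisymm (Nat.le_of_not_lt h) (Nat.lt_succ_iff.mp i.isLt))) x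

/-- Truncate a situation of length `n` to its first `k` states. -/
def trunc {𝒳 : ℕ → Type} {n : ℕ} (s : Sit 𝒳 n) (k : ℕ) (h : k ≤ n) : Sit 𝒳 k :=
  fun i => s ⟨i, lt_of_lt_of_le i.isLt h⟩

/-- A (coherent) lower expectation on a nonempty finite set. -/
def IsLE {Y : Type} [Fintype Y] [Nonempty Y] (E : (Y → ℝ) → ℝ) : Prop :=
  (∀ f : Y → ℝ, (⨅ y, f y) ≤ E f) ∧
  (∀ f g : Y → ℝ, E f + E g ≤ E (fun y => f y + g y)) ∧
  (∀ (f : Y → ℝ) (c : ℝ), 0 ≤ c → E (fun y => c * f y) = c * E f)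

/-- Submartingale w.r.t. the local models `Q` of an imprecise probability tree. -/
def IsSubmartingale {𝒳 : ℕ → Type} (Q : ∀ n, Sit 𝒳 n → (𝒳 n → ℝ) → ℝ)
    (F : ∀ n, Sit 𝒳 n → ℝ) : Prop :=
  ∀ (n : ℕ) (s : Sit 𝒳 n), 0 ≤ Q n s (fun x => F (n + 1) (snoc s x) - F n s)

/-- Supermartingale: `-F` is a submartingale. -/
def IsSupermartingale {𝒳 : ℕ → Type} (Q : ∀ n, Sit 𝒳 n → (𝒳 n → ℝ) → ℝ)
    (F : ∀ n, Sit 𝒳 n → ℝ) : Prop :=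
  IsSubmartingale Q (fun n s => -F n s)

/-- A test supermartingale: nonnegative, starting at 1. -/
def IsTestSupermartingale {𝒳 : ℕ → Type} (Q : ∀ n, Sit 𝒳 n → (𝒳 n → ℝ) → ℝ)
    (F : ∀ n, Sit 𝒳 n → ℝ) : Prop :=
  IsSupermartingale Q F ∧ (∀ n s, 0 ≤ F n s) ∧ F 0 emptySit = 1

/-- An event is strictly null if some test supermartingale converges to `+∞` on it. -/
def StrictlyNull {𝒳 : ℕ → Type} (Q : ∀ n, Sit 𝒳 n → (𝒳 n → ℝ) → ℝ)
    (A : Set (Path 𝒳)) : Prop :=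
  ∃ F : ∀ n, Sit 𝒳 n → ℝ, IsTestSupermartingale Q F ∧
    ∀ ω ∈ A, Tendsto (fun n => F n (res ω n)) atTop atTop

/-- `limsup_n F(ω^n)` as an extended real. -/
noncomputable def pathLimsup {𝒳 : ℕ → Type} (F : ∀ n, Sit 𝒳 n → ℝ) (ω : Path 𝒳) : EReal :=
  Filter.limsup (fun n => (F n (res ω n) : EReal)) atTop

/-- `liminf_n F(ω^n)` as an extended real. -/
noncomputable def pathLiminf {𝒳 : ℕ → Type} (F : ∀ n, Sit 𝒳 n → ℝ) (ω : Path 𝒳) : EReal :=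
  Filter.liminf (fun n => (F n (res ω n) : EReal)) atTop

/-- A real process bounded above. -/
def BddAbv {𝒳 : ℕ → Type} (F : ∀ n, Sit 𝒳 n → ℝ) : Prop := ∃ B : ℝ, ∀ n s, F n s ≤ B

/-- A real process bounded below. -/
def BddBlw {𝒳 : ℕ → Type} (F : ∀ n, Sit 𝒳 n → ℝ) : Prop := ∃ B : ℝ, ∀ n s, B ≤ F n s

/-- Conditional global lower expectation `E(f|s)` of an extended real variable. -/
noncomputable def lexp {𝒳 : ℕ → Type} (Q : ∀ n, Sit 𝒳 n → (𝒳 n → ℝ) → ℝ) {n : ℕ}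
    (s : Sit 𝒳 n) (f : Path 𝒳 → EReal) : EReal :=
  sSup ((fun F : ∀ k, Sit 𝒳 k → ℝ => (F n s : EReal)) ''
    {F : ∀ k, Sit 𝒳 k → ℝ | IsSubmartingale Q F ∧ BddAbv F ∧
      ∀ ω : Path 𝒳, res ω n = s → pathLimsup F ω ≤ f ω})

/-- Conditional global upper expectation `Ē(f|s)`. -/
noncomputable def uexp {𝒳 : ℕ → Type} (Q : ∀ n, Sit 𝒳 n → (𝒳 n → ℝ) → ℝ) {n : ℕ}
    (s : Sit 𝒳 n) (f : Path 𝒳 → EReal) : EReal :=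
  - lexp Q s (fun ω => - f ω)

/-- The local models of a (time-homogeneous) imprecise Markov chain with initial model `E1`
and transition models `QT`. -/
def markovQ {X : Type} (E1 : (X → ℝ) → ℝ) (QT : X → (X → ℝ) → ℝ) :
    ∀ n, Sit (fun _ => X) n → (X → ℝ) → ℝ
  | 0, _ => E1
  | n + 1, s => QT (s ⟨n, Nat.lt_succ_self n⟩)

/-- Prefix a path with a situation (fixed state space). -/
def prependX {X : Type} {n : ℕ} (s : Sit (fun _ => X) n) (ω : ℕ → X) : ℕ → X :=
  fun i => if h : i < n then s ⟨i, h⟩ else ω (i - n)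

/-- Extension of a lower transition operator to extended real maps. -/
noncomputable def Text {X : Type} (T : (X → ℝ) → X → ℝ) (g : X → EReal) : X → EReal :=
  fun x => sSup ((fun h : X → ℝ => (T h x : EReal)) '' {h : X → ℝ | ∀ y, (h y : EReal) ≤ g y})

/-- The variation (semi)norm `max h - min h`. -/
noncomputable def varnorm {X : Type} [Fintype X] [Nonempty X] (h : X → ℝ) : ℝ :=
  (⨆ x, h x) - ⨅ x, h x

/-- The (weak) coefficient of ergodicity of a lower transition operator. -/
noncomputable def coeff {X : Type} [Fintype X] [Nonempty X] (S : (X → ℝ) → X → ℝ) : ℝ :=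
  sSup {v : ℝ | ∃ h : X → ℝ, (∀ x, 0 ≤ h x ∧ h x ≤ 1) ∧ v = varnorm (S h)}

/-- Extend a situation to a path, arbitrarily. -/
noncomputable def extend {𝒳 : ℕ → Type} [∀ k, Nonempty (𝒳 k)] {n : ℕ} (t : Sit 𝒳 n) :
    Path 𝒳 :=
  fun i => if h : i < n then t ⟨i, h⟩ else Classical.arbitrary (𝒳 i)


section Aux

variable {𝒳 : ℕ → Type} [∀ n, Fintype (𝒳 n)] [∀ n, Nonempty (𝒳 n)]

lemma trunc_res (ω : Path 𝒳) {k n : ℕ} (h : n ≤ k) : trunc (res ω k) n h = res ω n := rfl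

lemma trunc_refl {n : ℕ} (s : Sit 𝒳 n) : trunc s n le_rfl = s := rfl

lemma trunc_snoc {k n : ℕ} (u : Sit 𝒳 k) (x : 𝒳 k) (h' : n ≤ k + 1) (h : n ≤ k) :
    trunc (snoc u x) n h' = trunc u n h := by
  funext i
  simp only [trunc, snoc]
  rw [dif_pos (lt_of_lt_of_le i.isLt h)]

lemma LE_zero {Y : Type} [Fintype Y] [Nonempty Y] {E : (Y → ℝ) → ℝ} (h : IsLE E) :
    E (fun _ => 0) = 0 := by
  have := h.2.2 (fun _ => 0) 0 le_rfl
  simpa using this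

lemma exists_nonneg_of_LE {Y : Type} [Fintype Y] [Nonempty Y] {E : (Y → ℝ) → ℝ} (h : IsLE E)
    (f : Y → ℝ) (hf : 0 ≤ E f) : ∃ y, 0 ≤ f y := by
  obtain ⟨y, hy⟩ := Finite.exists_max f
  refine ⟨y, le_trans hf ?_⟩
  have h1 : E f + E (fun z => -f z) ≤ E (fun z => f z + -f z) := h.2.1 _ _
  have h2 : E (fun z => f z + -f z) = 0 := by
    have : (fun z : Y => f z + -f z) = fun _ => (0:ℝ) := by funext z; ring
    rw [this]; exact LE_zero h
  have h3 : (⨅ z, -f z) ≤ E (fun z => -f z) := h.1 _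
  have h4 : -f y ≤ (⨅ z, -f z) := le_ciInf fun z => by simpa using hy z
  linarith


lemma submart_le_of_limsup_le (Q : ∀ n, Sit 𝒳 n → (𝒳 n → ℝ) → ℝ) (hQ : ∀ n s, IsLE (Q n s))
    {M : ∀ k, Sit 𝒳 k → ℝ} (hM : IsSubmartingale Q M) {k : ℕ} (t : Sit 𝒳 k) {c : EReal}
    (h : ∀ ω : Path 𝒳, res ω k = t → pathLimsup M ω ≤ c) : (M k t : EReal) ≤ c := by
  have step : ∀ (ℓ : ℕ) (u : Sit 𝒳 ℓ), ∃ x, M ℓ u ≤ M (ℓ + 1) (snoc u x) := by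
    intro ℓ u
    obtain ⟨x, hx⟩ := exists_nonneg_of_LE (hQ ℓ u) _ (hM ℓ u)
    exact ⟨x, by linarith⟩
  let u : ∀ j, Sit 𝒳 (k + j) := fun j => Nat.rec (motive := fun j => Sit 𝒳 (k + j)) t
    (fun j uj => snoc uj (Classical.choose (step (k + j) uj))) j
  have huS : ∀ j, u (j + 1) = snoc (u j) (Classical.choose (step (k + j) (u j))) := fun j => rfl
  have hmonoM : ∀ j, M k t ≤ M (k + j) (u j) := by
    intro j; induction j with
    | zero => exact le_rfl
    | succ j ih =>
      have h2 := Classical.choose_spec (step (k + j) (u j))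
      rw [huS j]
      exact le_trans ih h2
  have hcomp : ∀ (j : ℕ) (i : ℕ) (h1 : i < k + j) (h2 : i < k + (j + 1)),
      u (j + 1) ⟨i, h2⟩ = u j ⟨i, h1⟩ := by
    intro j i h1 h2
    rw [huS j]
    simp only [snoc]
    rw [dif_pos h1]
  have hmono : ∀ (j j' : ℕ), j ≤ j' → ∀ (i : ℕ) (h1 : i < k + j), ∀ (h2 : i < k + j'),
      u j' ⟨i, h2⟩ = u j ⟨i, h1⟩ := by
    intro j j' hjj i h1
    induction j', hjj using Nat.le_induction with
    | base => intro h2; rfl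
    | succ j' hjj ih => intro h2; exact (hcomp j' i (by omega) h2).trans (ih (by omega))
  let ω : Path 𝒳 := fun i => u (i + 1) ⟨i, by omega⟩
  have hres : ∀ j, res ω (k + j) = u j := by
    intro j; funext i
    show u ((i : ℕ) + 1) ⟨(i : ℕ), by omega⟩ = u j i
    rcases le_total j ((i : ℕ) + 1) with hle | hle
    · exact hmono j _ hle (i : ℕ) i.isLt _
    · exact (hmono _ j hle (i : ℕ) (by omega) i.isLt).symm
  have hω : res ω k = t := hres 0
  have hfreq : ∃ᶠ nn in atTop, (M k t : EReal) ≤ (M nn (res ω nn) : EReal) := by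
    rw [Filter.frequently_atTop]
    intro N
    refine ⟨k + N, by omega, ?_⟩
    rw [hres N]
    exact_mod_cast hmonoM N
  have hls : (M k t : EReal) ≤ pathLimsup M ω := le_limsup_of_frequently_le hfreq
  exact hls.trans (h ω hω)
lemma ereal_le_of_forall_sub (x : ℝ) (L : EReal)
    (h : ∀ ε : ℝ, 0 < ε → ((x - ε : ℝ) : EReal) ≤ L) : (x : EReal) ≤ L := by
  by_contra hc
  push_neg at hc
  obtain ⟨r, hr1, hr2⟩ := EReal.lt_iff_exists_real_btwn.mp hc
  have := h (x - r) (by exact_mod_cast sub_pos.mpr (EReal.coe_lt_coe_iff.mp hr2))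
  have hxr : ((x - (x - r) : ℝ) : EReal) = (r : EReal) := by norm_num
  rw [hxr] at this
  exact absurd this (not_le.mpr hr1)
end Aux

/-- Law of iterated lower expectations. -/
theorem iterated_lower_expectations {𝒳 : ℕ → Type} [∀ n, Fintype (𝒳 n)] [∀ n, Nonempty (𝒳 n)]
    (Q : ∀ n, Sit 𝒳 n → (𝒳 n → ℝ) → ℝ) (hQ : ∀ n s, IsLE (Q n s))
    (f : Path 𝒳 → EReal) (m n : ℕ) (hmn : m ≤ n) (s : Sit 𝒳 m) :
    lexp Q s f = lexp Q s (fun ω => lexp Q (res ω n) f) := by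
  classical
  apply le_antisymm
  · -- ≤ : modify F to be constant after time n
    refine sSup_le ?_
    rintro _ ⟨F, ⟨hF1, hF2, hF3⟩, rfl⟩
    let F₂ : ∀ k, Sit 𝒳 k → ℝ := fun k u => if h : n ≤ k then F n (trunc u n h) else F k u
    have hF₂ge : ∀ (k : ℕ) (hk : n ≤ k) (u : Sit 𝒳 k), F₂ k u = F n (trunc u n hk) :=
      fun k hk u => dif_pos hk
    have hF₂le : ∀ (k : ℕ) (hk : k ≤ n) (u : Sit 𝒳 k), F₂ k u = F k u := by
      intro k hk u
      rcases eq_or_lt_of_le hk with rfl | hlt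
      · rw [hF₂ge k le_rfl u]; rfl
      · exact dif_neg (by omega)
    have hF₂sub : IsSubmartingale Q F₂ := by
      intro k u
      rcases le_or_gt (k + 1) n with hk | hk
      · have e : (fun x => F₂ (k + 1) (snoc u x) - F₂ k u)
            = fun x => F (k + 1) (snoc u x) - F k u := by
          funext x; rw [hF₂le (k + 1) hk, hF₂le k (by omega)]
        rw [e]; exact hF1 k u
      · have hk' : n ≤ k := by omega
        have e : (fun x => F₂ (k + 1) (snoc u x) - F₂ k u) = fun _ => (0 : ℝ) := by
          funext x
          rw [hF₂ge (k + 1) (by omega), hF₂ge k hk', trunc_snoc u x (by omega) hk']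
          ring
        rw [e, LE_zero (hQ k u)]
    have hF₂bdd : BddAbv F₂ := by
      obtain ⟨B, hB⟩ := hF2
      refine ⟨B, fun k u => ?_⟩
      by_cases hk : n ≤ k
      · rw [hF₂ge k hk]; exact hB _ _
      · rw [hF₂le k (by omega)]; exact hB _ _
    have hF₂ls : ∀ ω : Path 𝒳, res ω m = s →
        pathLimsup F₂ ω ≤ lexp Q (res ω n) f := by
      intro ω hω
      have hev : ∀ᶠ kk in atTop,
          ((F₂ kk (res ω kk) : EReal)) = ((F n (res ω n) : EReal)) := by
        filter_upwards [eventually_ge_atTop n] with kk hk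
        rw [hF₂ge kk hk, trunc_res ω hk]
      have hlim : pathLimsup F₂ ω = ((F n (res ω n) : EReal)) := by
        unfold pathLimsup
        rw [limsup_congr hev, limsup_const]
      rw [hlim]
      refine le_sSup ⟨F, ⟨hF1, hF2, ?_⟩, rfl⟩
      intro ω' hω'
      apply hF3
      rw [show res ω' m = trunc (res ω' n) m hmn from rfl, hω']
      rw [trunc_res ω hmn]; exact hω
    have hFm : (F m s : EReal) = (F₂ m s : EReal) := by rw [hF₂le m hmn]
    rw [show (fun F : ∀ k, Sit 𝒳 k → ℝ => ((F m s : EReal))) F = ((F m s : EReal)) from rfl, hFm]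
    exact le_sSup ⟨F₂, ⟨hF₂sub, hF₂bdd, hF₂ls⟩, rfl⟩
  · -- ≥
    refine sSup_le ?_
    rintro _ ⟨G, ⟨hG1, hG2, hG3⟩, rfl⟩
    show (G m s : EReal) ≤ _
    apply ereal_le_of_forall_sub
    intro ε hε
    set P : Sit 𝒳 n → Prop := fun t => ∃ F' : ∀ k, Sit 𝒳 k → ℝ,
        (IsSubmartingale Q F' ∧ BddAbv F' ∧
          ∀ ω : Path 𝒳, res ω n = t → pathLimsup F' ω ≤ f ω) ∧ G n t - ε < F' n t with hPdef
    let H : Sit 𝒳 n → ∀ k, Sit 𝒳 k → ℝ := fun t =>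
      if h : P t then
        fun k u => (Classical.choose h) k u + (G n t - ε - (Classical.choose h) n t)
      else fun _ _ => G n t - ε
    have hHn : ∀ t, H t n t = G n t - ε := by
      intro t
      by_cases h : P t
      · simp only [H, dif_pos h]; ring
      · simp only [H, dif_neg h]
    have hHsub : ∀ t, IsSubmartingale Q (H t) := by
      intro t
      by_cases h : P t
      · intro k u
        have e : (fun x => H t (k + 1) (snoc u x) - H t k u)
            = fun x => (Classical.choose h) (k + 1) (snoc u x) - (Classical.choose h) k u := by
          funext x; simp only [H, dif_pos h]; ring
        rw [e]; exact (Classical.choose_spec h).1.1 k u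
      · intro k u
        have e : (fun x => H t (k + 1) (snoc u x) - H t k u) = fun _ => (0 : ℝ) := by
          funext x; simp only [H, dif_neg h]; ring
        rw [e, LE_zero (hQ k u)]
    have hHbdd : ∀ t, ∃ B, ∀ k u, H t k u ≤ B := by
      intro t
      by_cases h : P t
      · obtain ⟨B, hB⟩ := (Classical.choose_spec h).1.2.1
        refine ⟨B + (G n t - ε - (Classical.choose h) n t), fun k u => ?_⟩
        simp only [H, dif_pos h]
        have := hB k u
        linarith
      · exact ⟨G n t - ε, fun k u => by simp only [H, dif_neg h]; exact le_rfl⟩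
    choose bt hbt using hHbdd
    obtain ⟨BG, hBG⟩ := hG2
    let F : ∀ k, Sit 𝒳 k → ℝ := fun k u =>
      if h : n ≤ k then H (trunc u n h) k u else G k u - ε
    have hFge : ∀ (k : ℕ) (hk : n ≤ k) (u : Sit 𝒳 k), F k u = H (trunc u n hk) k u :=
      fun k hk u => dif_pos hk
    have hFle : ∀ (k : ℕ) (hk : k ≤ n) (u : Sit 𝒳 k), F k u = G k u - ε := by
      intro k hk u
      rcases eq_or_lt_of_le hk with rfl | hlt
      · rw [hFge k le_rfl u]; exact hHn u
      · exact dif_neg (by omega)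
    have hFsub : IsSubmartingale Q F := by
      intro k u
      rcases le_or_gt (k + 1) n with hk | hk
      · have e : (fun x => F (k + 1) (snoc u x) - F k u)
            = fun x => G (k + 1) (snoc u x) - G k u := by
          funext x; rw [hFle (k + 1) hk, hFle k (by omega)]; ring
        rw [e]; exact hG1 k u
      · have hk' : n ≤ k := by omega
        have e : (fun x => F (k + 1) (snoc u x) - F k u)
            = fun x => H (trunc u n hk') (k + 1) (snoc u x) - H (trunc u n hk') k u := by
          funext x
          rw [hFge (k + 1) (by omega), hFge k hk', trunc_snoc u x (by omega) hk']
        rw [e]; exact hHsub _ k u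
    have hFbdd : BddAbv F := by
      refine ⟨max BG (⨆ t, bt t), fun k u => ?_⟩
      by_cases hk : n ≤ k
      · rw [hFge k hk]
        exact le_trans (hbt _ k u)
          (le_trans (le_ciSup (Finite.bddAbove_range _) _) (le_max_right _ _))
      · rw [hFle k (by omega)]
        have h1 := hBG k u
        have h2 : BG ≤ max BG (⨆ t, bt t) := le_max_left _ _
        linarith
    have hPt : ∀ t : Sit 𝒳 n, trunc t m hmn = s → P t := by
      intro t ht
      have hc : (G n t : EReal) ≤ lexp Q t f := by
        apply submart_le_of_limsup_le Q hQ hG1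
        intro ω' hω'
        have hm' : res ω' m = s := by
          rw [show res ω' m = trunc (res ω' n) m hmn from rfl, hω']; exact ht
        have h5 : pathLimsup G ω' ≤ lexp Q (res ω' n) f := hG3 ω' hm'
        rwa [hω'] at h5
      have hlt : ((G n t - ε : ℝ) : EReal) < lexp Q t f := by
        refine lt_of_lt_of_le ?_ hc
        exact_mod_cast sub_lt_self _ hε
      unfold lexp at hlt
      obtain ⟨a, ⟨F', hF', rfl⟩, ha⟩ := lt_sSup_iff.mp hlt
      have ha' : ((G n t - ε : ℝ) : EReal) < ((F' n t : ℝ) : EReal) := ha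
      exact ⟨F', hF', by exact_mod_cast ha'⟩
    have hFls : ∀ ω : Path 𝒳, res ω m = s → pathLimsup F ω ≤ f ω := by
      intro ω hω
      have ht : trunc (res ω n) m hmn = s := by rw [trunc_res ω hmn]; exact hω
      have hp : P (res ω n) := hPt _ ht
      have hspec := Classical.choose_spec hp
      have hd : G n (res ω n) - ε - (Classical.choose hp) n (res ω n) ≤ 0 := by
        have h6 := hspec.2; linarith
      have hev : ∀ᶠ kk in atTop,
          ((F kk (res ω kk) : EReal)) ≤ (((Classical.choose hp) kk (res ω kk) : EReal)) := by
        filter_upwards [eventually_ge_atTop n] with kk hk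
        rw [hFge kk hk, trunc_res ω hk]
        rw [show H (res ω n) kk (res ω kk) = (Classical.choose hp) kk (res ω kk)
            + (G n (res ω n) - ε - (Classical.choose hp) n (res ω n)) from by
          simp only [H, dif_pos hp]]
        exact_mod_cast by linarith
      have h1 : pathLimsup F ω ≤ pathLimsup (Classical.choose hp) ω := limsup_le_limsup hev
      exact h1.trans (hspec.1.2.2 ω rfl)
    have hFm : ((G m s - ε : ℝ) : EReal) = ((F m s : EReal)) := by rw [hFle m hmn s]
    rw [hFm]
    exact le_sSup ⟨F, ⟨hFsub, hFbdd, hFls⟩, rfl⟩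

end IP
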